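/- Let $\hat{y} > 0$, $\rho \in [0,1)$, and $Z = \frac{(\rho-1)\hat{y}}{\sqrt{1-\rho^2}}$. If $\rho \sqrt{\frac{1+\rho}{1-\rho}} < \hat{y}$, then $\hat{y}\,\Phi(Z) - \frac{\rho}{\sqrt{1-\rho^2}}\,\phi(Z) > 0$; i.e., the Expected Improvement as a function of correlation $\rho$ is strictly increasing whenever $\rho\sqrt{(1+\rho)/(1-\rho)} < \hat{y}$. -/

import Mathlib

/-!
Let `g(z) = (z + √(z² + 4)) / 2 = 2 / (√(z² + 4) - z)`, the positive root of `g² = z g + 1`.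
Then `Φ - φ g` has derivative `φ g⁴ / (g² + 1) > 0` and vanishes at `-∞`, which gives the
Mills-ratio bound `φ(z) g(z) < Φ(z)`. With `s = √(1 - ρ²)` it remains to see `ρ / (s ŷ) ≤ g(Z)`.
Any `t` with `t² - Z t ≤ 1` satisfies `t ≤ g(Z)`, and for `t = ρ / (s ŷ)` this condition reduces
to `ρ² ≤ (1 - ρ) ŷ²`, which follows from squaring the hypothesis.
-/

open Real Set

/-- Standard normal pdf. -/
noncomputable def gaussPdf (x : ℝ) : ℝ := (Real.sqrt (2 * Real.pi))⁻¹ * Real.exp (-x ^ 2 / 2)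

/-- Standard normal cdf. -/
noncomputable def gaussCdf (x : ℝ) : ℝ := ∫ t in Set.Iic x, gaussPdf t

open MeasureTheory ProbabilityTheory Filter Topology

lemma gaussPdf_eq_gaussianPDFReal : gaussPdf = gaussianPDFReal 0 1 := by
  ext x
  simp [gaussPdf, gaussianPDFReal]

lemma gaussCdf_eq_cdf_gaussianReal : gaussCdf = cdf (gaussianReal 0 1) := by
  ext x
  rw [cdf_eq_real, measureReal_def, gaussianReal_apply_eq_integral _ one_ne_zero,
    ENNReal.toReal_ofReal (setIntegral_nonneg measurableSet_Iic fun t _ ↦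
      gaussianPDFReal_nonneg 0 1 t), gaussCdf, gaussPdf_eq_gaussianPDFReal]

lemma gaussPdf_pos (x : ℝ) : 0 < gaussPdf x := by
  unfold gaussPdf; positivity

lemma continuous_gaussPdf : Continuous gaussPdf := by
  unfold gaussPdf; fun_prop

lemma integrable_gaussPdf : Integrable gaussPdf :=
  gaussPdf_eq_gaussianPDFReal ▸ integrable_gaussianPDFReal 0 1

lemma hasDerivAt_gaussPdf (x : ℝ) : HasDerivAt gaussPdf (-x * gaussPdf x) x := by
  have h : HasDerivAt (fun y : ℝ ↦ -y ^ 2 / 2) (-x) x := by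
    simpa [neg_div] using (hasDerivAt_pow 2 x).neg.div_const 2
  exact (h.exp.const_mul (√(2 * π))⁻¹).congr_deriv (by simp only [gaussPdf]; ring)

lemma hasDerivAt_gaussCdf (x : ℝ) : HasDerivAt gaussCdf (gaussPdf x) x := by
  have hsplit : gaussCdf = fun y ↦ gaussCdf 0 + ∫ t in (0 : ℝ)..y, gaussPdf t := by
    ext y
    rw [← intervalIntegral.integral_Iic_sub_Iic integrable_gaussPdf.integrableOn
      integrable_gaussPdf.integrableOn, gaussCdf, gaussCdf, add_sub_cancel]
  rw [hsplit]
  exact (intervalIntegral.integral_hasDerivAt_right integrable_gaussPdf.intervalIntegrable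
    continuous_gaussPdf.aestronglyMeasurable.stronglyMeasurableAtFilter
    continuous_gaussPdf.continuousAt).const_add _

lemma tendsto_gaussPdf_atBot : Tendsto gaussPdf atBot (𝓝 0) := by
  have hsq : Tendsto (fun x : ℝ ↦ -x ^ 2 / 2) atBot atBot := by
    refine (tendsto_neg_atTop_atBot.comp ?_).atBot_div_const two_pos
    exact (tendsto_pow_atTop two_ne_zero).comp tendsto_abs_atBot_atTop |>.congr fun x ↦ sq_abs x
  have h := (Real.tendsto_exp_atBot.comp hsq).const_mul (√(2 * π))⁻¹
  rwa [mul_zero] at h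

lemma tendsto_gaussCdf_atBot : Tendsto gaussCdf atBot (𝓝 0) :=
  gaussCdf_eq_cdf_gaussianReal ▸ tendsto_cdf_atBot _

noncomputable def millsRoot (z : ℝ) : ℝ := (z + √(z ^ 2 + 4)) / 2

lemma millsRoot_sq (z : ℝ) : millsRoot z ^ 2 = z * millsRoot z + 1 := by
  have := Real.sq_sqrt (by positivity : 0 ≤ z ^ 2 + 4)
  unfold millsRoot; linear_combination this / 4

lemma millsRoot_pos (z : ℝ) : 0 < millsRoot z := by
  have : |z| < √(z ^ 2 + 4) := by
    rw [← Real.sqrt_sq_eq_abs]; exact Real.sqrt_lt_sqrt (sq_nonneg z) (by linarith)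
  unfold millsRoot; linarith [neg_abs_le z]

lemma millsRoot_le_one {z : ℝ} (hz : z ≤ 0) : millsRoot z ≤ 1 := by
  have := millsRoot_pos z
  nlinarith [millsRoot_sq z]

lemma le_millsRoot_of_sq_sub_mul_le {t z : ℝ} (h : t ^ 2 - z * t ≤ 1) : t ≤ millsRoot z := by
  have : 2 * t - z ≤ √(z ^ 2 + 4) := (le_abs_self _).trans (Real.abs_le_sqrt (by linarith))
  unfold millsRoot; linarith

lemma hasDerivAt_millsRoot (z : ℝ) :
    HasDerivAt millsRoot (millsRoot z ^ 2 / (millsRoot z ^ 2 + 1)) z := by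
  have h := ((hasDerivAt_id z).add
    (((hasDerivAt_pow 2 z).add_const 4).sqrt (by positivity))).div_const 2
  refine h.congr_deriv ?_
  have hsg : √(z ^ 2 + 4) = 2 * millsRoot z - z := by unfold millsRoot; ring
  have hs : 2 * millsRoot z - z ≠ 0 := hsg ▸ (by positivity)
  have hg := millsRoot_sq z
  rw [hsg]
  norm_num
  field_simp
  linear_combination (-2 * millsRoot z) * hg

lemma hasDerivAt_gaussCdf_sub_gaussPdf_mul_millsRoot (z : ℝ) :
    HasDerivAt (fun z ↦ gaussCdf z - gaussPdf z * millsRoot z)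
      (gaussPdf z * (millsRoot z ^ 2 - millsRoot z ^ 2 / (millsRoot z ^ 2 + 1))) z := by
  refine ((hasDerivAt_gaussCdf z).sub
    ((hasDerivAt_gaussPdf z).mul (hasDerivAt_millsRoot z))).congr_deriv ?_
  linear_combination -gaussPdf z * millsRoot_sq z

lemma strictMono_gaussCdf_sub_gaussPdf_mul_millsRoot :
    StrictMono fun z ↦ gaussCdf z - gaussPdf z * millsRoot z := by
  refine strictMono_of_deriv_pos fun z ↦ ?_
  rw [(hasDerivAt_gaussCdf_sub_gaussPdf_mul_millsRoot z).deriv]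
  have hg : 0 < millsRoot z ^ 2 := pow_pos (millsRoot_pos z) 2
  exact mul_pos (gaussPdf_pos z) (sub_pos.2 (div_lt_self hg (by linarith)))

lemma tendsto_gaussPdf_mul_millsRoot_atBot :
    Tendsto (fun z ↦ gaussPdf z * millsRoot z) atBot (𝓝 0) := by
  refine squeeze_zero' (.of_forall fun z ↦ (mul_pos (gaussPdf_pos z) (millsRoot_pos z)).le)
    ?_ tendsto_gaussPdf_atBot
  filter_upwards [eventually_le_atBot 0] with z hz
  exact mul_le_of_le_one_right (gaussPdf_pos z).le (millsRoot_le_one hz)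

theorem gaussPdf_mul_millsRoot_lt_gaussCdf (z : ℝ) : gaussPdf z * millsRoot z < gaussCdf z := by
  have hmono := strictMono_gaussCdf_sub_gaussPdf_mul_millsRoot
  have hlim : Tendsto (fun z ↦ gaussCdf z - gaussPdf z * millsRoot z) atBot (𝓝 0) := by
    simpa using tendsto_gaussCdf_atBot.sub tendsto_gaussPdf_mul_millsRoot_atBot
  have := (hmono.monotone.le_of_tendsto hlim (z - 1)).trans_lt (hmono (sub_one_lt z))
  linarith

lemma sq_lt_one_sub_mul_sq_of_mul_sqrt_lt {ρ y : ℝ} (hρ : ρ ∈ Ico (0 : ℝ) 1)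
    (h : ρ * √((1 + ρ) / (1 - ρ)) < y) : ρ ^ 2 < (1 - ρ) * y ^ 2 := by
  obtain ⟨hρ0, hρ1⟩ := hρ
  have hsq := pow_lt_pow_left₀ h (by positivity) two_ne_zero
  rw [mul_pow, Real.sq_sqrt (div_nonneg (by linarith) (by linarith)), mul_div_assoc',
    div_lt_iff₀ (by linarith)] at hsq
  nlinarith

theorem ei_deriv_pos (yhat ρ : ℝ) (hy : 0 < yhat) (hρ : ρ ∈ Set.Ico (0 : ℝ) 1)
    (h : ρ * Real.sqrt ((1 + ρ) / (1 - ρ)) < yhat) :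
    0 < yhat * gaussCdf ((ρ - 1) * yhat / Real.sqrt (1 - ρ ^ 2)) -
        ρ / Real.sqrt (1 - ρ ^ 2) * gaussPdf ((ρ - 1) * yhat / Real.sqrt (1 - ρ ^ 2)) := by
  have hsq := sq_lt_one_sub_mul_sq_of_mul_sqrt_lt hρ h
  obtain ⟨hρ0, hρ1⟩ := hρ
  set s := √(1 - ρ ^ 2)
  set Z := (ρ - 1) * yhat / s
  have hs : 0 < s := Real.sqrt_pos.2 (by nlinarith)
  have hs2 : s ^ 2 = 1 - ρ ^ 2 := Real.sq_sqrt (by nlinarith)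
  have hroot : ρ / (s * yhat) ≤ millsRoot Z := by
    refine le_millsRoot_of_sq_sub_mul_le ?_
    have hexpand : (ρ / (s * yhat)) ^ 2 - Z * (ρ / (s * yhat)) =
        (ρ ^ 2 + (1 - ρ) * ρ * yhat ^ 2) / (s ^ 2 * yhat ^ 2) := by
      unfold Z; field_simp; ring
    rw [hexpand, div_le_one (by positivity), hs2]
    nlinarith
  rw [sub_pos]
  calc ρ / s * gaussPdf Z = yhat * (ρ / (s * yhat)) * gaussPdf Z := by field_simp
    _ ≤ yhat * millsRoot Z * gaussPdf Z := by gcongr; exact (gaussPdf_pos Z).le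
    _ < yhat * gaussCdf Z := by
      rw [mul_assoc, mul_comm (millsRoot Z)]
      exact mul_lt_mul_of_pos_left (gaussPdf_mul_millsRoot_lt_gaussCdf Z) hy
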